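/- arXiv:2104.10196 — 2 statements merged into one kernel-verified Lean document; each statement's English description precedes it below -/
import Mathlib

section
/- In the auxiliary-function setup, the convex envelope h agrees with f at every base point: for each i ∈ {0,…,T,*}, h(x_i) = f(x_i) and g_i ∈ ∂h(x_i) (where g_* = 0). -/
noncomputable section

/-- Subdifferential of `f` at `x`. -/
def SubdiffAt {n : ℕ} (f : EuclideanSpace ℝ (Fin n) → ℝ) (x : EuclideanSpace ℝ (Fin n)) :
    Set (EuclideanSpace ℝ (Fin n)) :=
  {g | ∀ y, f x + (inner ℝ g (y - x) : ℝ) ≤ f y}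

/-- `(L,η)`-Hölder smoothness of `f`. -/
def HolderSmooth {n : ℕ} (L η : ℝ) (f : EuclideanSpace ℝ (Fin n) → ℝ) : Prop :=
  ∀ x x' g g', g ∈ SubdiffAt f x → g' ∈ SubdiffAt f x' → ‖g - g'‖ ≤ L * ‖x - x'‖ ^ η

/-- The stepsize `γ = ‖g‖^((1-η)/η)/L^(1/η)` if `η > 0`, else `0`. -/
def gammaStep {n : ℕ} (L η : ℝ) (g : EuclideanSpace ℝ (Fin n)) : ℝ :=
  if 0 < η then ‖g‖ ^ ((1 - η) / η) / L ^ (1 / η) else 0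

/-- The Hölder-smooth upper model `h_k` anchored at `c` with value `fc` and slope `g`. -/
def hModel {n : ℕ} (L η : ℝ) (c g : EuclideanSpace ℝ (Fin n)) (fc : ℝ)
    (y : EuclideanSpace ℝ (Fin n)) : ℝ :=
  fc + (inner ℝ g (y - c) : ℝ) + (L / (η + 1)) * ‖y - c‖ ^ (η + 1)

/-- `m(y) = min{h_k(y) : k ∈ {0,…,T,*}}` with `g_* = 0`. -/
def auxMin {n : ℕ} (L η : ℝ) (T : ℕ) (x g : ℕ → EuclideanSpace ℝ (Fin n))
    (f : EuclideanSpace ℝ (Fin n) → ℝ) (xs : EuclideanSpace ℝ (Fin n))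
    (y : EuclideanSpace ℝ (Fin n)) : ℝ :=
  min ((Finset.range (T + 1)).inf' (by simp) fun k => hModel L η (x k) (g k) (f (x k)) y)
      (hModel L η xs 0 (f xs) y)

/-- Convex envelope: pointwise supremum of all affine minorants of `m`. -/
def convEnvelope {n : ℕ} (m : EuclideanSpace ℝ (Fin n) → ℝ)
    (x : EuclideanSpace ℝ (Fin n)) : ℝ :=
  sSup {v | ∃ (g : EuclideanSpace ℝ (Fin n)) (b : ℝ),
    (∀ y, (inner ℝ g y : ℝ) + b ≤ m y) ∧ v = (inner ℝ g x : ℝ) + b}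

/-! Each model `h_k` lies above `f`. Along the segment from `x_k` to `y`, the difference quotients
of `f` are bounded by subgradients taken further along the segment, and Hölder smoothness bounds
those by `⟨g_k, y - x_k⟩ + L s^η ‖y - x_k‖^(η+1)`. Comparing with the antiderivative of this bound
(a Dini-derivative argument, so no differentiability of `f` is needed) gives `f ≤ h_k`. Hence
`f ≤ m` with equality at every base point, and the supporting affine function
`f(x_i) + ⟨g_i, · - x_i⟩` of `f` is an affine minorant of `m` touching it at `x_i`; this forces
`h(x_i) = f(x_i)` and makes `g_i` a subgradient of `h` there. -/

open Set Filter Topology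

theorem ConvexOn.exists_dual_add_le {E : Type*} [NormedAddCommGroup E] [NormedSpace ℝ E]
    {f : E → ℝ} (hf : ConvexOn ℝ univ f) (hcont : Continuous f) (z : E) :
    ∃ ℓ : StrongDual ℝ E, ∀ y, f z + ℓ (y - z) ≤ f y := by
  have hSo : IsOpen {p : E × ℝ | p.1 ∈ univ ∧ f p.1 < p.2} := by
    simpa only [mem_univ, true_and] using
      isOpen_lt (by fun_prop : Continuous fun p : E × ℝ => f p.1) continuous_snd
  -- separate `(z, f z)` from the open strict epigraph; `c < 0` makes the hyperplane non-vertical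
  obtain ⟨φ, hφ⟩ := geometric_hahn_banach_open_point hf.convex_strict_epigraph hSo
    (x := (z, f z)) (by simp)
  set A := φ.comp (ContinuousLinearMap.inl ℝ E ℝ)
  set c := φ (0, 1)
  have hφ_apply : ∀ y t, φ (y, t) = A y + t * c := fun y t => by
    have : (y, t) = (y, 0) + t • ((0 : E), (1 : ℝ)) := by simp
    rw [this, map_add, map_smul, smul_eq_mul]
    rfl
  have hc : c < 0 := by
    have := hφ (z, f z + 1) (by simp)
    rw [hφ_apply, hφ_apply] at this
    linarith
  refine ⟨(-c)⁻¹ • A, fun y => ?_⟩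
  have key : A (y - z) ≤ c * (f z - f y) := by
    refine le_of_forall_pos_lt_add fun ε hε => ?_
    have hεc : ε / c < 0 := div_neg_of_pos_of_neg hε hc
    have := hφ (y, f y - ε / c) ⟨trivial, by linarith⟩
    rw [hφ_apply, hφ_apply, sub_mul, div_mul_cancel₀ ε hc.ne] at this
    rw [map_sub]
    linarith
  change f z + (-c)⁻¹ * A (y - z) ≤ f y
  have : (-c)⁻¹ * A (y - z) ≤ f y - f z := by
    rw [inv_mul_le_iff₀ (neg_pos.2 hc)]
    linarith
  linarith

section Euclidean

variable {n : ℕ} {f : EuclideanSpace ℝ (Fin n) → ℝ}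

theorem exists_mem_subdiffAt (hf : ConvexOn ℝ univ f) (z : EuclideanSpace ℝ (Fin n)) :
    ∃ g, g ∈ SubdiffAt f z := by
  obtain ⟨ℓ, hℓ⟩ := hf.exists_dual_add_le (continuousOn_univ.1 (hf.continuousOn isOpen_univ)) z
  refine ⟨(InnerProductSpace.toDual ℝ _).symm ℓ, fun y => ?_⟩
  simpa only [InnerProductSpace.toDual_symm_apply] using hℓ y

theorem slope_le_inner_of_mem_subdiffAt {x d g : EuclideanSpace ℝ (Fin n)} {t s : ℝ}
    (hg : g ∈ SubdiffAt f (x + s • d)) (hts : t < s) :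
    slope (fun r => f (x + r • d)) t s ≤ inner ℝ g d := by
  have h := hg (x + t • d)
  rw [show x + t • d - (x + s • d) = (t - s) • d by rw [sub_smul]; abel,
    real_inner_smul_right] at h
  rw [slope_def_field, div_le_iff₀ (sub_pos.2 hts)]
  linarith

theorem HolderSmooth.inner_le {L η : ℝ} (hs : HolderSmooth L η f) (hη : 0 ≤ η)
    {x d g gx : EuclideanSpace ℝ (Fin n)} {s : ℝ} (hs0 : 0 ≤ s)
    (hg : g ∈ SubdiffAt f (x + s • d)) (hgx : gx ∈ SubdiffAt f x) :
    inner ℝ g d ≤ inner ℝ gx d + L * ‖d‖ ^ (η + 1) * s ^ η := by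
  have hd : ‖x + s • d - x‖ ^ η = s ^ η * ‖d‖ ^ η := by
    rw [add_sub_cancel_left, norm_smul, Real.norm_of_nonneg hs0,
      Real.mul_rpow hs0 (norm_nonneg d)]
  calc inner ℝ g d = inner ℝ gx d + inner ℝ (g - gx) d := by rw [inner_sub_left]; ring
    _ ≤ inner ℝ gx d + ‖g - gx‖ * ‖d‖ := by gcongr; exact real_inner_le_norm _ _
    _ ≤ inner ℝ gx d + L * ‖x + s • d - x‖ ^ η * ‖d‖ := by
        gcongr; exact hs _ _ _ _ hg hgx
    _ = inner ℝ gx d + L * ‖d‖ ^ (η + 1) * s ^ η := by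
        rw [hd, Real.rpow_add_one' (norm_nonneg d) (by linarith)]; ring

theorem HolderSmooth.le_hModel {L η : ℝ} (hf : ConvexOn ℝ univ f) (hs : HolderSmooth L η f)
    (hη : 0 ≤ η) {x gx : EuclideanSpace ℝ (Fin n)} (hgx : gx ∈ SubdiffAt f x)
    (y : EuclideanSpace ℝ (Fin n)) : f y ≤ hModel L η x gx (f x) y := by
  set d := y - x
  set K := L * ‖d‖ ^ (η + 1)
  set B : ℝ → ℝ := fun t => f x + t * inner ℝ gx d + K / (η + 1) * t ^ (η + 1)
  set B' : ℝ → ℝ := fun t => inner ℝ gx d + K * t ^ η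
  have hB : ∀ t, HasDerivAt B (B' t) t := fun t => by
    have hpow := (Real.hasDerivAt_rpow_const (x := t) (Or.inr (by linarith : 1 ≤ η + 1))).const_mul
      (K / (η + 1))
    refine ((((hasDerivAt_id t).mul_const (inner ℝ gx d)).const_add (f x)).add hpow).congr_deriv ?_
    rw [add_sub_cancel_right, one_mul, ← mul_assoc, div_mul_cancel₀ K (by linarith : η + 1 ≠ 0)]
  have hB'_cont : Continuous B' :=
    continuous_const.add (continuous_const.mul (Real.continuous_rpow_const hη))
  have hslope : ∀ t ∈ Ico (0 : ℝ) 1, ∀ r, B' t < r →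
      ∃ᶠ s in 𝓝[>] t, slope (fun r => f (x + r • d)) t s < r := by
    intro t ht r hr
    refine Eventually.frequently ?_
    filter_upwards [(hB'_cont.continuousWithinAt (s := Ioi t)).eventually (gt_mem_nhds hr),
      self_mem_nhdsWithin] with s hsr hts
    obtain ⟨g, hg⟩ := exists_mem_subdiffAt hf (x + s • d)
    calc slope (fun r => f (x + r • d)) t s ≤ inner ℝ g d := slope_le_inner_of_mem_subdiffAt hg hts
      _ ≤ B' s := hs.inner_le hη (ht.1.trans hts.le) hg hgx
      _ < r := hsr
  have hcont : Continuous f := continuousOn_univ.1 (hf.continuousOn isOpen_univ)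
  have := image_le_of_liminf_slope_right_le_deriv_boundary (a := 0) (b := 1)
    (f := fun t => f (x + t • d)) (by fun_prop) (B := B) (B' := B') ?_
    (fun t _ => (hB t).continuousAt.continuousWithinAt) (fun t _ => (hB t).hasDerivWithinAt) hslope
    (right_mem_Icc.2 zero_le_one)
  · simp only [B, d, K, one_smul, add_sub_cancel, one_mul, Real.one_rpow] at this
    refine this.trans_eq ?_
    rw [hModel]
    ring
  · simp [B, Real.zero_rpow (by linarith : η + 1 ≠ 0)]

end Euclidean

section Envelope

variable {n : ℕ} {m : EuclideanSpace ℝ (Fin n) → ℝ}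

theorem le_convEnvelope {g : EuclideanSpace ℝ (Fin n)} {b : ℝ}
    (hle : ∀ y, inner ℝ g y + b ≤ m y) (x : EuclideanSpace ℝ (Fin n)) :
    inner ℝ g x + b ≤ convEnvelope m x :=
  le_csSup ⟨m x, by rintro _ ⟨g', b', h', rfl⟩; exact h' x⟩ ⟨g, b, hle, rfl⟩

theorem convEnvelope_le {g : EuclideanSpace ℝ (Fin n)} {b : ℝ}
    (hle : ∀ y, inner ℝ g y + b ≤ m y) (x : EuclideanSpace ℝ (Fin n)) :
    convEnvelope m x ≤ m x :=
  csSup_le ⟨_, g, b, hle, rfl⟩ (by rintro _ ⟨g', b', h', rfl⟩; exact h' x)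

theorem convEnvelope_eq_and_mem_subdiffAt {f : EuclideanSpace ℝ (Fin n) → ℝ}
    {p gp : EuclideanSpace ℝ (Fin n)} (hgp : gp ∈ SubdiffAt f p) (hfm : ∀ y, f y ≤ m y)
    (hmp : m p ≤ f p) : convEnvelope m p = f p ∧ gp ∈ SubdiffAt (convEnvelope m) p := by
  have hminorant : ∀ y, inner ℝ gp y + (f p - inner ℝ gp p) ≤ m y := fun y => by
    have := hgp y
    rw [inner_sub_right] at this
    linarith [hfm y]
  have hsupport : ∀ y, f p + inner ℝ gp (y - p) ≤ convEnvelope m y := fun y => by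
    have := le_convEnvelope hminorant y
    rw [inner_sub_right]
    linarith
  have hp : convEnvelope m p = f p :=
    le_antisymm ((convEnvelope_le hminorant p).trans hmp) (by simpa using hsupport p)
  exact ⟨hp, fun y => hp ▸ hsupport y⟩

end Envelope

section AuxMin

variable {n : ℕ} {L η : ℝ} {T : ℕ} {x g : ℕ → EuclideanSpace ℝ (Fin n)}
  {f : EuclideanSpace ℝ (Fin n) → ℝ} {xs : EuclideanSpace ℝ (Fin n)}

theorem hModel_self (hη : η + 1 ≠ 0) (c g : EuclideanSpace ℝ (Fin n)) (fc : ℝ) :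
    hModel L η c g fc c = fc := by
  simp [hModel, Real.zero_rpow hη]

theorem le_auxMin (hf : ConvexOn ℝ univ f) (hs : HolderSmooth L η f) (hη : 0 ≤ η)
    (hsub : ∀ k ≤ T, g k ∈ SubdiffAt f (x k)) (hsubstar : 0 ∈ SubdiffAt f xs)
    (y : EuclideanSpace ℝ (Fin n)) : f y ≤ auxMin L η T x g f xs y :=
  le_min (Finset.le_inf' _ _ fun k hk =>
      hs.le_hModel hf hη (hsub k (Nat.lt_succ_iff.1 (Finset.mem_range.1 hk))) y)
    (hs.le_hModel hf hη hsubstar y)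

theorem auxMin_apply_le (hη : η + 1 ≠ 0) {k : ℕ} (hk : k ≤ T) :
    auxMin L η T x g f xs (x k) ≤ f (x k) :=
  min_le_of_left_le <| (Finset.inf'_le _ (Finset.mem_range.2 (Nat.lt_succ_of_le hk))).trans_eq
    (hModel_self hη _ _ _)

theorem auxMin_apply_minimizer_le (hη : η + 1 ≠ 0) : auxMin L η T x g f xs xs ≤ f xs :=
  min_le_of_right_le (hModel_self hη _ _ _).le

end AuxMin

theorem envelope_agreement_general {n : ℕ} (f : EuclideanSpace ℝ (Fin n) → ℝ) (L η : ℝ) (T : ℕ)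
    (x g : ℕ → EuclideanSpace ℝ (Fin n)) (xs : EuclideanSpace ℝ (Fin n))
    (h : EuclideanSpace ℝ (Fin n) → ℝ)
    (hconv : ConvexOn ℝ Set.univ f)
    (hη0 : 0 ≤ η)
    (hsmooth : HolderSmooth L η f)
    (hsub : ∀ k ≤ T, g k ∈ SubdiffAt f (x k))
    (hsubstar : (0 : EuclideanSpace ℝ (Fin n)) ∈ SubdiffAt f xs)
    (hh : h = convEnvelope (auxMin L η T x g f xs)) :
    (∀ k ≤ T, h (x k) = f (x k) ∧ g k ∈ SubdiffAt h (x k)) ∧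
    h xs = f xs ∧ (0 : EuclideanSpace ℝ (Fin n)) ∈ SubdiffAt h xs := by
  subst hh
  have hη : η + 1 ≠ 0 := by linarith
  have hfm := le_auxMin hconv hsmooth hη0 hsub hsubstar
  exact ⟨fun k hk => convEnvelope_eq_and_mem_subdiffAt (hsub k hk) hfm (auxMin_apply_le hη hk),
    convEnvelope_eq_and_mem_subdiffAt hsubstar hfm (auxMin_apply_minimizer_le hη)⟩

/-- the convex envelope agrees with `f` at every base point (Lemma 1). -/
theorem envelope_agreement {n : ℕ} (f : EuclideanSpace ℝ (Fin n) → ℝ) (L η : ℝ) (T : ℕ)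
    (x g : ℕ → EuclideanSpace ℝ (Fin n)) (xs : EuclideanSpace ℝ (Fin n))
    (h : EuclideanSpace ℝ (Fin n) → ℝ)
    (hconv : ConvexOn ℝ Set.univ f)
    (hL : 0 < L) (hη0 : 0 ≤ η) (hη1 : η ≤ 1)
    (hsmooth : HolderSmooth L η f)
    (hsub : ∀ k ≤ T, g k ∈ SubdiffAt f (x k))
    (hmin : ∀ y, f xs ≤ f y)
    (hsubstar : (0 : EuclideanSpace ℝ (Fin n)) ∈ SubdiffAt f xs)
    (hh : h = convEnvelope (auxMin L η T x g f xs)) :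
    (∀ k ≤ T, h (x k) = f (x k) ∧ g k ∈ SubdiffAt h (x k)) ∧
    h xs = f xs ∧ (0 : EuclideanSpace ℝ (Fin n)) ∈ SubdiffAt h xs :=
  envelope_agreement_general f L η T x g xs h hconv hη0 hsmooth hsub hsubstar hh

end
end

section
/- Let f : ℝⁿ → ℝ be convex with minimizer x_*, suppose every subgradient g ∈ ∂f(x) at every x satisfies ‖g‖ ≤ L for some L > 0, and suppose f has sharp growth: f(x) ≥ f(x_*) + α‖x − x_*‖ for all x, with α > 0. Let (x_k) be generated by the Polyak subgradient method from x_0 and let 0 < ε ≤ f(x_0) − f(x_*). Then there exists an index k ≤ (4L²/α²)·⌈log₂((f(x_0) − f(x_*))/ε)⌉ with f(x_k) − f(x_*) ≤ ε. -/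
/-!
Each Polyak step shrinks the squared distance to `x_*` by at least `(f(x_k) − f_*)² / L²`,
while sharp growth bounds that squared distance by `(f(x_k) − f_*)² / α²`. Summing over a
window of `⌈4L²/α²⌉` steps, some iterate in the window must have its gap at most half the gap
at the start of the window; repeating this `⌈log₂((f(x_0) − f_*)/ε)⌉` times brings the gap
below `ε`.
-/

noncomputable section
open Classical

/-- `(x, g)` is a trajectory of the Polyak subgradient method for `f` with minimizer value
`f xs`: each `g k` is a subgradient at `x k` and the Polyak step is taken
(staying put when the subgradient is zero). -/
def PolyakSeq {n : ℕ} (f : EuclideanSpace ℝ (Fin n) → ℝ) (xs : EuclideanSpace ℝ (Fin n))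
    (x g : ℕ → EuclideanSpace ℝ (Fin n)) : Prop :=
  (∀ k, g k ∈ SubdiffAt f (x k)) ∧
  ∀ k, x (k + 1) =
    if g k = 0 then x k else x k - ((f (x k) - f xs) / ‖g k‖ ^ 2) • g k

open Finset RealInnerProductSpace

theorem sub_le_inner_of_mem_subdiffAt {n : ℕ} {f : EuclideanSpace ℝ (Fin n) → ℝ}
    {x g : EuclideanSpace ℝ (Fin n)} (hg : g ∈ SubdiffAt f x) (y : EuclideanSpace ℝ (Fin n)) :
    f x - f y ≤ ⟪g, x - y⟫ := by
  have h := hg y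
  rw [← neg_sub x y, inner_neg_right] at h
  linarith

section PolyakStep

variable {E : Type*} [NormedAddCommGroup E] [InnerProductSpace ℝ E]

theorem norm_sub_polyakStep_sq_le {x y g : E} {h : ℝ} (hh : 0 ≤ h) (hinner : h ≤ ⟪g, x - y⟫)
    (hg : g ≠ 0) :
    ‖x - (h / ‖g‖ ^ 2) • g - y‖ ^ 2 ≤ ‖x - y‖ ^ 2 - h ^ 2 / ‖g‖ ^ 2 := by
  have hg2 : 0 < ‖g‖ ^ 2 := by positivity
  set ρ := h / ‖g‖ ^ 2 with hρ
  have hρ0 : 0 ≤ ρ := div_nonneg hh hg2.le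
  have hρg : ρ ^ 2 * ‖g‖ ^ 2 = ρ * h := by rw [hρ]; field_simp
  have hρh : ρ * h = h ^ 2 / ‖g‖ ^ 2 := by rw [hρ]; ring
  have hexpand : ‖x - ρ • g - y‖ ^ 2 = ‖x - y‖ ^ 2 - 2 * ρ * ⟪g, x - y⟫ + ρ ^ 2 * ‖g‖ ^ 2 := by
    rw [sub_right_comm, norm_sub_sq_real, real_inner_smul_right, real_inner_comm, norm_smul,
      mul_pow, Real.norm_eq_abs, sq_abs]
    ring
  rw [hexpand, hρg, ← hρh]
  nlinarith [mul_le_mul_of_nonneg_left hinner hρ0]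

theorem norm_sub_polyakStep_sq_le_of_norm_le [DecidableEq E] {x y g : E} {h L : ℝ} (hh : 0 ≤ h)
    (hinner : h ≤ ⟪g, x - y⟫) (hgL : ‖g‖ ≤ L) :
    ‖(if g = 0 then x else x - (h / ‖g‖ ^ 2) • g) - y‖ ^ 2 ≤ ‖x - y‖ ^ 2 - h ^ 2 / L ^ 2 := by
  split_ifs with hg
  · have h0 : h = 0 := le_antisymm (by simpa [hg] using hinner) hh
    simp [h0]
  · have hL : h ^ 2 / L ^ 2 ≤ h ^ 2 / ‖g‖ ^ 2 :=
      div_le_div_of_nonneg_left (sq_nonneg h) (by positivity)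
        (pow_le_pow_left₀ (norm_nonneg g) hgL 2)
    linarith [norm_sub_polyakStep_sq_le hh hinner hg]

end PolyakStep

theorem sum_range_le_sub_of_le_sub {d u : ℕ → ℝ} (hd : ∀ k, d (k + 1) ≤ d k - u k) (k T : ℕ) :
    ∑ j ∈ range T, u (k + j) ≤ d k - d (k + T) :=
  (sum_le_sum fun j _ => by rw [← add_assoc]; linarith [hd (k + j)]).trans_eq
    (sum_range_sub' (fun j => d (k + j)) T)

/-- `d` plays the role of the squared distance to the minimizer and `F` of the optimality gap. -/
theorem exists_le_half_of_sq_descent {d F : ℕ → ℝ} {L α : ℝ} (hL : L ≠ 0) (hα : α ≠ 0)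
    (hd : ∀ k, d (k + 1) ≤ d k - F k ^ 2 / L ^ 2) (hd0 : ∀ k, 0 ≤ d k)
    (hdF : ∀ k, d k ≤ F k ^ 2 / α ^ 2) (hF : ∀ k, 0 ≤ F k) (k : ℕ) :
    ∃ j : ℕ, (j : ℝ) ≤ k + 4 * L ^ 2 / α ^ 2 ∧ F j ≤ F k / 2 := by
  set c := 4 * L ^ 2 / α ^ 2 with hc_def
  have hc : 0 < c := by positivity
  set T := ⌈c⌉₊
  have hT : 0 < T := Nat.ceil_pos.2 hc
  have hsum : ∑ j ∈ range T, F (k + j) ^ 2 / L ^ 2 ≤ ∑ _j ∈ range T, (F k / 2) ^ 2 / L ^ 2 :=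
    calc ∑ j ∈ range T, F (k + j) ^ 2 / L ^ 2
        ≤ d k - d (k + T) := sum_range_le_sub_of_le_sub hd k T
      _ ≤ F k ^ 2 / α ^ 2 := by linarith [hdF k, hd0 (k + T)]
      _ = c * ((F k / 2) ^ 2 / L ^ 2) := by rw [hc_def]; field_simp; ring
      _ ≤ T * ((F k / 2) ^ 2 / L ^ 2) := by gcongr; exact Nat.le_ceil c
      _ = ∑ _j ∈ range T, (F k / 2) ^ 2 / L ^ 2 := by simp
  obtain ⟨i, hi, hFi⟩ := exists_le_of_sum_le (nonempty_range_iff.2 hT.ne') hsum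
  have hiT : (i : ℝ) + 1 ≤ T := by exact_mod_cast mem_range.1 hi
  refine ⟨k + i, ?_, ?_⟩
  · push_cast
    linarith [Nat.ceil_lt_add_one hc.le]
  · have hsq : F (k + i) ^ 2 ≤ (F k / 2) ^ 2 :=
      le_of_mul_le_mul_right (by simpa only [div_eq_mul_inv] using hFi) (by positivity)
    exact (le_abs_self _).trans (abs_le_of_sq_le_sq hsq (by linarith [hF k]))

theorem exists_le_div_two_pow_of_halving {F : ℕ → ℝ} {c : ℝ}
    (hhalf : ∀ k : ℕ, ∃ j : ℕ, (j : ℝ) ≤ k + c ∧ F j ≤ F k / 2) (m : ℕ) :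
    ∃ k : ℕ, (k : ℝ) ≤ m * c ∧ F k ≤ F 0 / 2 ^ m := by
  induction m with
  | zero => exact ⟨0, by simp, by simp⟩
  | succ m ih =>
    obtain ⟨k, hk, hFk⟩ := ih
    obtain ⟨j, hj, hFj⟩ := hhalf k
    refine ⟨j, by push_cast; linarith, ?_⟩
    rw [pow_succ, ← div_div]
    linarith

theorem div_two_pow_le_of_logb_le {a ε : ℝ} {m : ℕ} (ha : 0 < a) (hε : 0 < ε)
    (hm : Real.logb 2 (a / ε) ≤ m) : a / 2 ^ m ≤ ε := by
  rw [Real.logb_le_iff_le_rpow one_lt_two (div_pos ha hε), Real.rpow_natCast,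
    div_le_iff₀ hε] at hm
  rw [div_le_iff₀ (by positivity)]
  linarith

theorem polyak_sharp_rate_general {n : ℕ} (f : EuclideanSpace ℝ (Fin n) → ℝ) (L α : ℝ)
    (xs : EuclideanSpace ℝ (Fin n)) (x g : ℕ → EuclideanSpace ℝ (Fin n))
    (hmin : ∀ y, f xs ≤ f y)
    (hL : 0 < L)
    (hgL : ∀ (z v : EuclideanSpace ℝ (Fin n)), v ∈ SubdiffAt f z → ‖v‖ ≤ L)
    (hα : 0 < α)
    (hsharp : ∀ y, f xs + α * ‖y - xs‖ ≤ f y)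
    (hseq : PolyakSeq f xs x g)
    (ε : ℝ) (hε : 0 < ε) (hεle : ε ≤ f (x 0) - f xs) :
    ∃ k : ℕ, (k : ℝ) ≤ (4 * L ^ 2 / α ^ 2) * (⌈Real.logb 2 ((f (x 0) - f xs) / ε)⌉ : ℝ) ∧
      f (x k) - f xs ≤ ε := by
  obtain ⟨hsub, hstep⟩ := hseq
  have hgap : ∀ k, 0 ≤ f (x k) - f xs := fun k => sub_nonneg.2 (hmin _)
  have hdescent : ∀ k, ‖x (k + 1) - xs‖ ^ 2 ≤ ‖x k - xs‖ ^ 2 - (f (x k) - f xs) ^ 2 / L ^ 2 :=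
    fun k => by
      rw [hstep k]
      exact norm_sub_polyakStep_sq_le_of_norm_le (hgap k)
        (sub_le_inner_of_mem_subdiffAt (hsub k) xs) (hgL _ _ (hsub k))
  have hdist : ∀ k, ‖x k - xs‖ ^ 2 ≤ (f (x k) - f xs) ^ 2 / α ^ 2 := fun k => by
    rw [le_div_iff₀ (by positivity), ← mul_pow, mul_comm]
    exact pow_le_pow_left₀ (by positivity) (by linarith [hsharp (x k)]) 2
  have hhalf := exists_le_half_of_sq_descent hL.ne' hα.ne' hdescent (fun _ => sq_nonneg _)
    hdist hgap
  have hceil : 0 ≤ ⌈Real.logb 2 ((f (x 0) - f xs) / ε)⌉ :=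
    Int.ceil_nonneg (Real.logb_nonneg one_lt_two ((one_le_div hε).2 hεle))
  set m := ⌈Real.logb 2 ((f (x 0) - f xs) / ε)⌉.toNat
  have hm : (m : ℝ) = ⌈Real.logb 2 ((f (x 0) - f xs) / ε)⌉ := by
    exact_mod_cast Int.toNat_of_nonneg hceil
  obtain ⟨k, hk, hFk⟩ := exists_le_div_two_pow_of_halving hhalf m
  refine ⟨k, by rw [← hm]; linarith, hFk.trans (div_two_pow_le_of_logb_le (by linarith) hε ?_)⟩
  rw [hm]
  exact Int.le_ceil _

/-- under sharp growth, the Polyak subgradient method finds an ε-minimizer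
within (4L²/α²)·⌈log₂((f(x₀) − f(x_*))/ε)⌉ iterations. -/
theorem polyak_sharp_rate {n : ℕ} (f : EuclideanSpace ℝ (Fin n) → ℝ) (L α : ℝ)
    (xs : EuclideanSpace ℝ (Fin n)) (x g : ℕ → EuclideanSpace ℝ (Fin n))
    (hconv : ConvexOn ℝ Set.univ f)
    (hmin : ∀ y, f xs ≤ f y)
    (hL : 0 < L)
    (hgL : ∀ (z v : EuclideanSpace ℝ (Fin n)), v ∈ SubdiffAt f z → ‖v‖ ≤ L)
    (hα : 0 < α)
    (hsharp : ∀ y, f xs + α * ‖y - xs‖ ≤ f y)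
    (hseq : PolyakSeq f xs x g)
    (ε : ℝ) (hε : 0 < ε) (hεle : ε ≤ f (x 0) - f xs) :
    ∃ k : ℕ, (k : ℝ) ≤ (4 * L ^ 2 / α ^ 2) * (⌈Real.logb 2 ((f (x 0) - f xs) / ε)⌉ : ℝ) ∧
      f (x k) - f xs ≤ ε :=
  polyak_sharp_rate_general f L α xs x g hmin hL hgL hα hsharp hseq ε hε hεle
end
end
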